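/- Suppose C₁ and C₂ are continuous group automorphisms of GL(n,ℂ) (continuous with continuous inverses) and x₁, x₂ ∈ GL(n,ℂ) are such that Cᵢ(xᵢ h xᵢ⁻¹) = xᵢ h⁻¹ xᵢ⁻¹ for all invertible diagonal matrices h and i = 1, 2 (i.e. Cᵢ inverts the maximal torus xᵢ T xᵢ⁻¹ pointwise). Then there exists g ∈ GL(n,ℂ) with C₂ = int(g) ∘ C₁ ∘ int(g)⁻¹, where int(g) denotes the inner automorphism x ↦ gxg⁻¹. -/

import Mathlib

/-!
Conjugating by `x₁` and `x₂` turns `C₁` and `C₂` into automorphisms `D₁`, `D₂` that invert the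
diagonal torus `T` pointwise, so `A = D₂ D₁⁻¹` fixes `T` pointwise.

Such an `A` commutes with conjugation by `T`. The image `g` of the transvection `E_ij(1)` therefore
commutes with every diagonal matrix whose `i`th and `j`th entries agree, which confines `g` to the
span of the diagonal matrices, `e_ij` and `e_ji`; the relations `E_ij(1)² = E_ij(2)` and
`E_ij(1) E_ij(-1) = 1`, transported by torus conjugation, then force `g = E_ij(b)` with `b ≠ 0`.
Thus `A (E_ij(c)) = E_ij(a_ij c)`. The commutator relation between `E_ij` and `E_jk` and the
Gauss decomposition of `E_ij(1) E_ji(1)` show that `a` is a multiplicative cocycle, so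
`a_ij = v_i / v_j`, and as diagonal matrices and transvections generate `GL`, `A` is conjugation
by `diag v`. Writing `v = r²` and using `D₁ (diag r) = (diag r)⁻¹`, conjugation by `diag r`
carries `D₁` to `D₂`.
-/

open Matrix

theorem exists_eq_div_of_mul_eq {ι G : Type*} [CommGroup G] (a : ι → ι → G)
    (ha : ∀ i j k, a i j * a j k = a i k) : ∃ v : ι → G, ∀ i j, a i j = v i / v j := by
  cases isEmpty_or_nonempty ι with
  | inl _ => exact ⟨1, fun i => isEmptyElim i⟩
  | inr h =>
    obtain ⟨o⟩ := h
    exact ⟨fun k => a k o, fun i j => eq_div_of_mul_eq' (ha i j o)⟩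

namespace MulAut

variable {G : Type*} [Group G]

theorem conj_inv_mul_mul_conj_apply_eq_inv {C : MulAut G} {y h : G}
    (hC : C (y * h * y⁻¹) = y * h⁻¹ * y⁻¹) : ((conj y)⁻¹ * C * conj y) h = h⁻¹ := by
  rw [mul_apply, mul_apply, conj_apply, hC, conj_inv_apply]
  group

theorem conj_mul_mul_conj_inv_of_apply_eq_inv {C : MulAut G} {t : G} (ht : C t = t⁻¹) :
    conj t * C * (conj t)⁻¹ = conj (t * t) * C := by
  ext x
  simp [mul_apply, conj_apply, ht, mul_assoc]

theorem mul_inv_apply_eq_self {D₁ D₂ : MulAut G} {h : G} (h₁ : D₁ h⁻¹ = h) (h₂ : D₂ h⁻¹ = h) :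
    (D₂ * D₁⁻¹) h = h := by
  rw [mul_apply, inv_apply, (MulEquiv.symm_apply_eq _).mpr h₁.symm, h₂]

end MulAut

theorem IsAlgClosed.exists_units_eq_mul_self {k : Type*} [Field k] [IsAlgClosed k] (u : kˣ) :
    ∃ r : kˣ, u = r * r := by
  obtain ⟨z, hz⟩ := IsAlgClosed.exists_eq_mul_self (u : k)
  have hz0 : z ≠ 0 := by
    rintro rfl
    simp at hz
  exact ⟨Units.mk0 z hz0, Units.ext hz⟩

namespace Matrix

variable {ι R K : Type*} [Fintype ι] [DecidableEq ι] [CommRing R] [Field K]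

theorem diagonal_mul_single_mul_diagonal (d e : ι → R) (i j : ι) (c : R) :
    diagonal d * single i j c * diagonal e = single i j (d i * c * e j) := by
  ext k l
  by_cases h : i = k ∧ j = l
  · obtain ⟨rfl, rfl⟩ := h; simp
  · simp [single_apply_of_ne _ _ _ _ _ h]

theorem transvection_mul_transvection_eq_swap_mul {i j k : ι} (hij : i ≠ j) (hik : i ≠ k)
    (c d : R) :
    transvection i j c * transvection j k d
      = transvection j k d * transvection i j c * transvection i k (c * d) := by
  simp only [transvection, Matrix.add_mul, Matrix.mul_add, Matrix.one_mul, Matrix.mul_one,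
    single_mul_single_same, single_mul_single_of_ne _ _ _ _ hik.symm,
    single_mul_single_of_ne _ _ _ _ hij.symm, add_zero]
  abel

theorem transvection_mul_transvection_eq_ldu {i j : ι} (hij : i ≠ j) (x y : K)
    (hu : 1 + x * y ≠ 0) :
    transvection i j x * transvection j i y
      = transvection j i (y / (1 + x * y)) *
        (diagonal (Function.update (Function.update 1 i (1 + x * y)) j (1 + x * y)⁻¹) *
        transvection i j (x / (1 + x * y))) := by
  ext k l
  by_cases hki : k = i
  · rw [hki, transvection_mul_apply_same, transvection_mul_apply_of_ne _ _ _ _ hij]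
    by_cases hli : l = i
    · simp [transvection, hli, hij, hij.symm]
    by_cases hlj : l = j
    · simp [transvection, hlj, hij, hij.symm]; field_simp
    · simp [transvection, Function.update_apply, hij.symm, Ne.symm hli, Ne.symm hlj]
  by_cases hkj : k = j
  · rw [hkj, transvection_mul_apply_of_ne _ _ _ _ hij.symm, transvection_mul_apply_same]
    by_cases hli : l = i
    · simp [transvection, hli, hij, hij.symm, hu]
    by_cases hlj : l = j
    · simp [transvection, hlj, hij]; field_simp
    · simp [transvection, Function.update_apply, Ne.symm hli, Ne.symm hlj]
  · rw [transvection_mul_apply_of_ne _ _ _ _ hki, transvection_mul_apply_of_ne _ _ _ _ hkj]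
    simp [transvection, hki, hkj, Ne.symm hki, Ne.symm hkj]

theorem eq_diagonal_add_single_add_single_of_commute [NeZero (2 : K)] {i j : ι} (hij : i ≠ j)
    {M : Matrix ι ι K}
    (hM : ∀ t : ι → Kˣ, t i = t j → Commute (diagonal fun k => (t k : K)) M) :
    M = diagonal M.diag + single i j (M i j) + single j i (M j i) := by
  have hzero : ∀ k l, k ≠ l → ¬(i = k ∧ j = l) → ¬(j = k ∧ i = l) → M k l = 0 := by
    intro k l hkl hij' hji'
    -- scaling a coordinate `p ∈ {k, l}` outside `{i, j}` moves the entry `M k l`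
    obtain ⟨p, hp, hpi, hpj⟩ : ∃ p, (p = k ∨ p = l) ∧ p ≠ i ∧ p ≠ j := by
      by_cases hk : k = i ∨ k = j
      · refine ⟨l, Or.inr rfl, ?_, ?_⟩ <;> rintro rfl <;> tauto
      · push Not at hk; exact ⟨k, Or.inl rfl, hk⟩
    have h := congr_fun₂ (hM (Pi.mulSingle p (Units.mk0 2 two_ne_zero))
      (by simp [hpi.symm, hpj.symm])).eq k l
    simp only [diagonal_mul, mul_diagonal, Pi.mulSingle_apply] at h
    rcases hp with rfl | rfl
    · simp [hkl.symm] at h; linear_combination h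
    · simp [hkl] at h; linear_combination -h
  ext k l
  by_cases hkl : k = l
  · subst hkl
    have hi : ¬(i = k ∧ j = k) := fun h => hij (h.1.trans h.2.symm)
    have hj : ¬(j = k ∧ i = k) := fun h => hij (h.2.trans h.1.symm)
    simp [single_apply_of_ne _ _ _ _ _ hi, single_apply_of_ne _ _ _ _ _ hj]
  by_cases hij' : i = k ∧ j = l
  · obtain ⟨rfl, rfl⟩ := hij'; simp [hij, hij.symm]
  by_cases hji' : j = k ∧ i = l
  · obtain ⟨rfl, rfl⟩ := hji'; simp [hij, hij.symm]
  simp [hkl, single_apply_of_ne _ _ _ _ _ hij', single_apply_of_ne _ _ _ _ _ hji',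
    hzero k l hkl hij' hji']

theorem diagonal_add_single_add_single_eq_transvection [CharZero K] {i j : ι} (hij : i ≠ j)
    {d : ι → K} {b c : K}
    (hsq : (diagonal d + single i j b + single j i c) * (diagonal d + single i j b + single j i c)
      = diagonal d + single i j (2 * b) + single j i (2⁻¹ * c))
    (hinv : (diagonal d + single i j b + single j i c) *
      (diagonal d + single i j (-b) + single j i (-c)) = 1) :
    diagonal d + single i j b + single j i c = transvection i j b := by
  have sq := Matrix.ext_iff.mpr hsq
  have inv := Matrix.ext_iff.mpr hinv
  simp only [Matrix.add_mul, Matrix.mul_add, diagonal_mul_diagonal, single_mul_single_same,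
    single_mul_single_of_ne _ _ _ _ hij, single_mul_single_of_ne _ _ _ _ hij.symm] at sq inv
  have sq_ij := sq i j
  have sq_ji := sq j i
  have sq_ii := sq i i
  have sq_jj := sq j j
  have inv_ii := inv i i
  have inv_jj := inv j j
  simp [hij, hij.symm] at sq_ij sq_ji sq_ii sq_jj inv_ii inv_jj
  have hbc : b * c = 0 := by
    by_contra h
    obtain ⟨hb, hc⟩ := mul_ne_zero_iff.mp h
    have h₁ : d i + d j = 2 := mul_left_cancel₀ hb (by linear_combination sq_ij)
    have h₂ : d i + d j = 2⁻¹ := mul_left_cancel₀ hc (by linear_combination sq_ji)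
    norm_num [h₁] at h₂
  have hdi : d i = 1 := by linear_combination inv_ii - sq_ii + 2 * hbc
  have hdj : d j = 1 := by linear_combination inv_jj - sq_jj + 2 * hbc
  have hc : c = 0 := by linear_combination (2 / 3 : K) * (sq_ji - c * hdi - c * hdj)
  have hd : d = 1 := by
    funext k
    by_cases hki : k = i
    · rw [hki, hdi, Pi.one_apply]
    by_cases hkj : k = j
    · rw [hkj, hdj, Pi.one_apply]
    have sq_kk := sq k k
    have inv_kk := inv k k
    simp [Ne.symm hki, Ne.symm hkj] at sq_kk inv_kk
    rw [Pi.one_apply]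
    linear_combination inv_kk - sq_kk
  simp [hd, hc, transvection]

end Matrix

namespace Matrix.GeneralLinearGroup

variable {ι R K : Type*} [Fintype ι] [DecidableEq ι] [CommRing R] [Field K]

def ofDiagonal : (ι → Rˣ) →* GL ι R where
  toFun t := ⟨diagonal fun k => (t k : R), diagonal fun k => ((t k)⁻¹ : Rˣ),
    by simp [diagonal_mul_diagonal], by simp [diagonal_mul_diagonal]⟩
  map_one' := by ext : 1; simp
  map_mul' t t' := by ext : 1; simp [diagonal_mul_diagonal]

@[simp]
theorem coe_ofDiagonal (t : ι → Rˣ) :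
    (ofDiagonal t : Matrix ι ι R) = diagonal fun k => (t k : R) := rfl

def ofTransvection {i j : ι} (hij : i ≠ j) (c : R) : GL ι R :=
  ⟨transvection i j c, transvection i j (-c),
    by simp [transvection_mul_transvection_same _ _ hij],
    by simp [transvection_mul_transvection_same _ _ hij]⟩

@[simp]
theorem coe_ofTransvection {i j : ι} (hij : i ≠ j) (c : R) :
    (ofTransvection hij c : Matrix ι ι R) = transvection i j c := rfl

variable {i j k : ι}

theorem ofTransvection_mul_ofTransvection (hij : i ≠ j) (c d : R) :
    ofTransvection hij c * ofTransvection hij d = ofTransvection hij (c + d) :=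
  Units.ext (transvection_mul_transvection_same _ _ hij c d)

theorem ofTransvection_zero (hij : i ≠ j) : ofTransvection hij (0 : R) = 1 :=
  Units.ext (transvection_zero i j)

theorem ofTransvection_injective (hij : i ≠ j) :
    Function.Injective (ofTransvection (R := R) hij) := fun c d h => by
  simpa [transvection, hij] using congrArg (fun x : GL ι R => (x : Matrix ι ι R) i j) h

theorem ofDiagonal_mul_ofTransvection_mul_inv (t : ι → Rˣ) (hij : i ≠ j) (c : R) :
    ofDiagonal t * ofTransvection hij c * (ofDiagonal t)⁻¹
      = ofTransvection hij ((t i : R) * c * ((t j)⁻¹ : Rˣ)) := by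
  rw [← map_inv]
  ext : 1
  simp only [Units.val_mul, coe_ofDiagonal, coe_ofTransvection, transvection, Matrix.mul_add,
    Matrix.add_mul, Matrix.mul_one, diagonal_mul_diagonal, diagonal_mul_single_mul_diagonal]
  simp

theorem isDiag_coe_inv {x : GL ι K} (hx : (x : Matrix ι ι K).IsDiag) :
    ((x⁻¹ : GL ι K) : Matrix ι ι K).IsDiag := by
  rw [coe_units_inv, ← hx.diagonal_diag, inv_diagonal]
  exact isDiag_diagonal _

theorem monoidHom_ext_of_isDiag_of_transvection {M : Type*} [Monoid M] {f g : GL ι K →* M}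
    (hdiag : ∀ x : GL ι K, (x : Matrix ι ι K).IsDiag → f x = g x)
    (htransvection : ∀ (i j : ι) (hij : i ≠ j) (c : K),
      f (ofTransvection hij c) = g (ofTransvection hij c)) :
    f = g := by
  ext x
  refine diagonal_transvection_induction_of_det_ne_zero
    (fun M => ∀ y : GL ι K, (y : Matrix ι ι K) = M → f y = g y) x (det_ne_zero x)
    (fun D _ y hy => hdiag y (hy ▸ isDiag_diagonal D))
    (fun t y hy => ?_) (fun M N hM hN hfM hfN y hy => ?_) x rfl
  · obtain rfl : y = ofTransvection t.hij t.c := Units.ext hy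
    exact htransvection _ _ t.hij t.c
  · obtain rfl : y = mkOfDetNeZero M hM * mkOfDetNeZero N hN := Units.ext hy
    rw [map_mul, map_mul, hfM _ rfl, hfN _ rfl]

theorem map_ofDiagonal_mul_mul_inv {A : MulAut (GL ι K)}
    (hA : ∀ x : GL ι K, (x : Matrix ι ι K).IsDiag → A x = x) (t : ι → Kˣ) (x : GL ι K) :
    A (ofDiagonal t * x * (ofDiagonal t)⁻¹) = ofDiagonal t * A x * (ofDiagonal t)⁻¹ := by
  rw [map_mul, map_mul, map_inv, hA _ (isDiag_diagonal _)]

theorem map_ofTransvection_eq_conj {A : MulAut (GL ι K)}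
    (hA : ∀ x : GL ι K, (x : Matrix ι ι K).IsDiag → A x = x) (hij : i ≠ j) (t : ι → Kˣ) :
    A (ofTransvection hij ((t i : K) * ((t j)⁻¹ : Kˣ)))
      = ofDiagonal t * A (ofTransvection hij 1) * (ofDiagonal t)⁻¹ := by
  rw [← map_ofDiagonal_mul_mul_inv hA, ofDiagonal_mul_ofTransvection_mul_inv, mul_one]

theorem exists_map_ofTransvection_one_eq [CharZero K] {A : MulAut (GL ι K)}
    (hA : ∀ x : GL ι K, (x : Matrix ι ι K).IsDiag → A x = x) (hij : i ≠ j) :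
    ∃ b : K, A (ofTransvection hij 1) = ofTransvection hij b := by
  set g := A (ofTransvection hij 1) with hg_def
  obtain ⟨d, b, c, hg⟩ :
      ∃ d b c, (g : Matrix ι ι K) = diagonal d + single i j b + single j i c := by
    refine ⟨_, _, _, eq_diagonal_add_single_add_single_of_commute hij fun t ht => ?_⟩
    have h := map_ofTransvection_eq_conj hA hij t
    rw [ht, Units.mul_inv, eq_mul_inv_iff_mul_eq] at h
    exact congrArg Units.val h.symm
  have hscale : ∀ u : Kˣ, (A (ofTransvection hij u) : Matrix ι ι K)
      = diagonal d + single i j (u * b) + single j i ((u⁻¹ : Kˣ) * c) := fun u => by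
    have h := map_ofTransvection_eq_conj hA hij (Pi.mulSingle i u)
    simp only [Pi.mulSingle_eq_same, Pi.mulSingle_eq_of_ne hij.symm, inv_one, Units.val_one,
      mul_one, ← hg_def] at h
    rw [h, ← map_inv]
    simp only [Units.val_mul, coe_ofDiagonal, hg, Matrix.mul_add, Matrix.add_mul,
      diagonal_mul_diagonal, diagonal_mul_single_mul_diagonal]
    simp [hij.symm, mul_comm]
  have hsq : (g : Matrix ι ι K) * g = diagonal d + single i j (2 * b) + single j i (2⁻¹ * c) := by
    rw [← Units.val_mul, ← map_mul, ofTransvection_mul_ofTransvection, one_add_one_eq_two]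
    simpa using hscale (Units.mk0 2 two_ne_zero)
  have hinv : (g : Matrix ι ι K) * (diagonal d + single i j (-b) + single j i (-c)) = 1 := by
    have h := hscale (-1)
    simp only [Units.val_neg, Units.val_one, inv_neg, inv_one, neg_mul, one_mul] at h
    rw [← h, ← Units.val_mul, ← map_mul, ofTransvection_mul_ofTransvection, add_neg_cancel,
      ofTransvection_zero, map_one, Units.val_one]
  rw [hg] at hsq hinv
  exact ⟨b, Units.ext (hg.trans (diagonal_add_single_add_single_eq_transvection hij hsq hinv))⟩

theorem exists_map_ofTransvection [CharZero K] {A : MulAut (GL ι K)}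
    (hA : ∀ x : GL ι K, (x : Matrix ι ι K).IsDiag → A x = x) (hij : i ≠ j) :
    ∃ a : Kˣ, ∀ c : K, A (ofTransvection hij c) = ofTransvection hij (a * c) := by
  obtain ⟨b, hb⟩ := exists_map_ofTransvection_one_eq hA hij
  have hb0 : b ≠ 0 := by
    rintro rfl
    rw [ofTransvection_zero, ← map_one A] at hb
    exact one_ne_zero
      (ofTransvection_injective hij ((A.injective hb).trans (ofTransvection_zero hij).symm))
  refine ⟨Units.mk0 b hb0, fun c => ?_⟩
  rcases eq_or_ne c 0 with rfl | hc
  · simp [ofTransvection_zero]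
  have h := map_ofTransvection_eq_conj hA hij (Pi.mulSingle i (Units.mk0 c hc))
  simp only [Pi.mulSingle_eq_same, Pi.mulSingle_eq_of_ne hij.symm, inv_one, Units.val_one,
    mul_one, Units.val_mk0] at h
  rw [h, hb, ofDiagonal_mul_ofTransvection_mul_inv]
  simp [hij.symm, mul_comm]

theorem mul_eq_of_map_ofTransvection {A : MulAut (GL ι K)} (hij : i ≠ j) (hjk : j ≠ k)
    (hik : i ≠ k) {a b c : K} (ha : ∀ x, A (ofTransvection hij x) = ofTransvection hij (a * x))
    (hb : ∀ x, A (ofTransvection hjk x) = ofTransvection hjk (b * x))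
    (hc : ∀ x, A (ofTransvection hik x) = ofTransvection hik (c * x)) :
    a * b = c := by
  have hswap : ∀ x y : K, ofTransvection hij x * ofTransvection hjk y
      = ofTransvection hjk y * ofTransvection hij x * ofTransvection hik (x * y) := fun x y =>
    Units.ext (transvection_mul_transvection_eq_swap_mul hij hik x y)
  have h := congrArg A (hswap 1 1)
  simp only [map_mul, ha, hb, hc, mul_one, hswap a b] at h
  exact ofTransvection_injective hik (mul_left_cancel h)

theorem mul_eq_one_of_map_ofTransvection [CharZero K] {A : MulAut (GL ι K)}
    (hA : ∀ x : GL ι K, (x : Matrix ι ι K).IsDiag → A x = x) (hij : i ≠ j) {a b : K}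
    (ha : ∀ x, A (ofTransvection hij x) = ofTransvection hij (a * x))
    (hb : ∀ x, A (ofTransvection hij.symm x) = ofTransvection hij.symm (b * x)) :
    a * b = 1 := by
  set q := ofTransvection hij.symm (-(1 / 2) : K) *
    (ofTransvection hij 1 * ofTransvection hij.symm 1) * ofTransvection hij (-(1 / 2) : K)
  -- By the LDU decomposition `q` is diagonal, hence fixed by `A`; the `(i, i)` entry of `q` is
  -- `1 + 1 * 1` and that of `A q` is `1 + a * b`.
  have hq : (q : Matrix ι ι K).IsDiag := by
    have hgauss := transvection_mul_transvection_eq_ldu hij (1 : K) 1 (by norm_num)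
    norm_num at hgauss
    simp only [q, Units.val_mul, coe_ofTransvection, hgauss]
    rw [← Matrix.mul_assoc, transvection_mul_transvection_same _ _ hij.symm, neg_add_cancel,
      transvection_zero, Matrix.one_mul, Matrix.mul_assoc,
      transvection_mul_transvection_same _ _ hij, add_neg_cancel, transvection_zero, Matrix.mul_one]
    exact isDiag_diagonal _
  have h := congrArg (fun x : GL ι K => (x : Matrix ι ι K) i i) (hA q hq)
  simp only [q, map_mul, ha, hb, Units.val_mul, coe_ofTransvection] at h
  simp [hij] at h
  simp [transvection, hij, hij.symm] at h
  linear_combination h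

theorem exists_eq_conj_ofDiagonal [CharZero K] {A : MulAut (GL ι K)}
    (hA : ∀ x : GL ι K, (x : Matrix ι ι K).IsDiag → A x = x) :
    ∃ v : ι → Kˣ, A = MulAut.conj (ofDiagonal v) := by
  -- Extending the scaling factors by `a i i = 1` makes them a cocycle on all triples.
  have hscale : ∀ i j : ι, ∃ a : Kˣ, (i = j → a = 1) ∧
      ∀ (hij : i ≠ j) (c : K), A (ofTransvection hij c) = ofTransvection hij (a * c) := by
    intro i j
    by_cases hij : i = j
    · exact ⟨1, fun _ => rfl, fun h => absurd hij h⟩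
    · obtain ⟨a, ha⟩ := exists_map_ofTransvection hA hij
      exact ⟨a, fun h => absurd h hij, fun _ => ha⟩
  choose a ha_diag ha using hscale
  have hcocycle : ∀ i j k, a i j * a j k = a i k := by
    intro i j k
    rcases eq_or_ne i j with rfl | hij
    · rw [ha_diag i i rfl, one_mul]
    rcases eq_or_ne j k with rfl | hjk
    · rw [ha_diag j j rfl, mul_one]
    rcases eq_or_ne i k with rfl | hik
    · refine Units.ext ?_
      simpa [ha_diag i i rfl] using
        mul_eq_one_of_map_ofTransvection hA hij (ha i j hij) (ha j i hij.symm)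
    · refine Units.ext ?_
      simpa using mul_eq_of_map_ofTransvection hij hjk hik (ha i j hij) (ha j k hjk) (ha i k hik)
  obtain ⟨v, hv⟩ := exists_eq_div_of_mul_eq a hcocycle
  refine ⟨v, MulEquiv.toMonoidHom_injective (monoidHom_ext_of_isDiag_of_transvection ?_ ?_)⟩
  · intro x hx
    simp only [MulEquiv.coe_toMonoidHom, MulAut.conj_apply]
    rw [hA x hx, eq_mul_inv_iff_mul_eq]
    ext : 1
    rw [Units.val_mul, Units.val_mul, ← hx.diagonal_diag, coe_ofDiagonal, diagonal_mul_diagonal,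
      diagonal_mul_diagonal]
    simp only [mul_comm]
  · intro i j hij c
    simp only [MulEquiv.coe_toMonoidHom, MulAut.conj_apply]
    rw [ha i j hij c, ofDiagonal_mul_ofTransvection_mul_inv, hv i j]
    congr 1
    push_cast
    ring

end Matrix.GeneralLinearGroup

theorem chevalley_involutions_conjugate_general (n : ℕ)
    (C₁ C₂ : GL (Fin n) ℂ ≃* GL (Fin n) ℂ)
    (x₁ x₂ : GL (Fin n) ℂ)
    (h₁ : ∀ h : GL (Fin n) ℂ, (h : Matrix (Fin n) (Fin n) ℂ).IsDiag →
      C₁ (x₁ * h * x₁⁻¹) = x₁ * h⁻¹ * x₁⁻¹)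
    (h₂ : ∀ h : GL (Fin n) ℂ, (h : Matrix (Fin n) (Fin n) ℂ).IsDiag →
      C₂ (x₂ * h * x₂⁻¹) = x₂ * h⁻¹ * x₂⁻¹) :
    ∃ g : GL (Fin n) ℂ, ∀ x : GL (Fin n) ℂ, C₂ x = g * C₁ (g⁻¹ * x * g) * g⁻¹ := by
  set D₁ : MulAut (GL (Fin n) ℂ) := (MulAut.conj x₁)⁻¹ * C₁ * MulAut.conj x₁
  set D₂ : MulAut (GL (Fin n) ℂ) := (MulAut.conj x₂)⁻¹ * C₂ * MulAut.conj x₂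
  have hD₁ h hh : D₁ h = h⁻¹ := MulAut.conj_inv_mul_mul_conj_apply_eq_inv (h₁ h hh)
  have hD₂ h hh : D₂ h = h⁻¹ := MulAut.conj_inv_mul_mul_conj_apply_eq_inv (h₂ h hh)
  have hfix : ∀ h : GL (Fin n) ℂ, (h : Matrix (Fin n) (Fin n) ℂ).IsDiag →
      (D₂ * D₁⁻¹) h = h := fun h hh => by
    have hh' := GeneralLinearGroup.isDiag_coe_inv hh
    exact MulAut.mul_inv_apply_eq_self (by rw [hD₁ _ hh', inv_inv]) (by rw [hD₂ _ hh', inv_inv])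
  obtain ⟨v, hv⟩ := GeneralLinearGroup.exists_eq_conj_ofDiagonal hfix
  choose r hr using fun k => IsAlgClosed.exists_units_eq_mul_self (v k)
  set t := GeneralLinearGroup.ofDiagonal r
  have htt : t * t = GeneralLinearGroup.ofDiagonal v := by
    rw [← map_mul]
    exact congrArg _ (funext hr).symm
  have hD : D₂ = MulAut.conj t * D₁ * (MulAut.conj t)⁻¹ := by
    rw [MulAut.conj_mul_mul_conj_inv_of_apply_eq_inv (hD₁ t (isDiag_diagonal _)), htt, ← hv,
      inv_mul_cancel_right]
  refine ⟨x₂ * t * x₁⁻¹, fun x => ?_⟩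
  have hC : C₂ = MulAut.conj (x₂ * t * x₁⁻¹) * C₁ * (MulAut.conj (x₂ * t * x₁⁻¹))⁻¹ := by
    have hC₂ : C₂ = MulAut.conj x₂ * D₂ * (MulAut.conj x₂)⁻¹ := by simp only [D₂]; group
    rw [hC₂, hD]
    simp only [D₁, map_mul, map_inv]
    group
  rw [hC]
  simp [MulAut.mul_apply, MulAut.conj_apply, mul_assoc]

/-- Any two continuous automorphisms `C₁, C₂` of `GL(n,ℂ)` inverting the
maximal tori `x₁Tx₁⁻¹` and `x₂Tx₂⁻¹` pointwise (where `T` is the diagonal torus) are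
conjugate by an inner automorphism: `C₂ = int(g) ∘ C₁ ∘ int(g)⁻¹` for some `g ∈ GL(n,ℂ)`. -/
theorem chevalley_involutions_conjugate (n : ℕ) (hn : 1 ≤ n)
    (C₁ C₂ : GL (Fin n) ℂ ≃* GL (Fin n) ℂ)
    (hC₁ : Continuous (⇑C₁)) (hC₁symm : Continuous (⇑C₁.symm))
    (hC₂ : Continuous (⇑C₂)) (hC₂symm : Continuous (⇑C₂.symm))
    (x₁ x₂ : GL (Fin n) ℂ)
    (h₁ : ∀ h : GL (Fin n) ℂ, (h : Matrix (Fin n) (Fin n) ℂ).IsDiag →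
      C₁ (x₁ * h * x₁⁻¹) = x₁ * h⁻¹ * x₁⁻¹)
    (h₂ : ∀ h : GL (Fin n) ℂ, (h : Matrix (Fin n) (Fin n) ℂ).IsDiag →
      C₂ (x₂ * h * x₂⁻¹) = x₂ * h⁻¹ * x₂⁻¹) :
    ∃ g : GL (Fin n) ℂ, ∀ x : GL (Fin n) ℂ, C₂ x = g * C₁ (g⁻¹ * x * g) * g⁻¹ :=
  chevalley_involutions_conjugate_general n C₁ C₂ x₁ x₂ h₁ h₂
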